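/- Let β_f = (∑_{i∈T} Cᵢ')/Rᶠ where T is the set of tasks processed at the fog node, and suppose β_f < 1. Define γ_u = (∑_{i∈T} Dᵢ'/(1-β_f) + ∑_{i∈S} Dᵢ')/Rᵘ and γ_d = (∑_{i∈T} Oᵢ'/(1-β_f) + ∑_{i∈S} Oᵢ')/Rᵈ, where S is the set of tasks forwarded to the cloud (with Cᵢ' = 0 for i ∈ S). If γ_u + γ_d ≤ 1, then there exists an allocation with rᵢᶠ > 0 for i ∈ T, rᵢᵘ, rᵢᵈ > 0 for all i ∈ T ∪ S, capacity constraints ∑_{i∈T} rᵢᶠ ≤ Rᶠ, ∑ rᵢᵘ ≤ Rᵘ, ∑ rᵢᵈ ≤ Rᵈ, and satisfaction rate Dᵢ'/rᵢᵘ + Oᵢ'/rᵢᵈ + Cᵢ'/rᵢᶠ ≤ 1 for every i ∈ T (and Dᵢ'/rᵢᵘ + Oᵢ'/rᵢᵈ ≤ 1 for i ∈ S). -/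

import Mathlib

/-!
Share every resource proportionally to the demands placed on it: if task `i` gets
`R * wᵢ / ∑ w` of a capacity `R`, every task sees the same delay `wᵢ / rᵢ = (∑ w) / R`.
Giving the fog compute this way costs each fog task exactly `β_f`; scaling the fog tasks'
communication demands by `1 / (1 - β_f)` before sharing the links makes their communication
delay `(1 - β_f)(γ_u + γ_d)`, so the total stays within `1` for fog and cloud tasks alike.
-/

open Finset

theorem Finset.sum_union_piecewise_of_disjoint {ι M : Type*} [DecidableEq ι] [AddCommMonoid M]
    {s t : Finset ι} (h : Disjoint s t) (f g : ι → M) :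
    ∑ i ∈ s ∪ t, s.piecewise f g i = ∑ i ∈ s, f i + ∑ i ∈ t, g i := by
  rw [sum_piecewise, union_inter_cancel_left, union_sdiff_left, sdiff_eq_self_of_disjoint h.symm]

theorem Finset.mul_piecewise_div_of_mem {ι K : Type*} [DecidableEq ι] [CommGroupWithZero K]
    {s : Finset ι} {i : ι} (w : ι → K) {c : K} (hc : c ≠ 0) (hi : i ∈ s) :
    c * s.piecewise (fun j ↦ w j / c) w i = w i := by
  rw [piecewise_eq_of_mem _ _ _ hi, mul_div_cancel₀ _ hc]

section ProportionalShare

variable {ι K : Type*} [Field K] [LinearOrder K]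
  (s : Finset ι) (w : ι → K) (R : K)

noncomputable def proportionalShare (i : ι) : K := R * w i / ∑ j ∈ s, w j

variable {s w R}

theorem sum_proportionalShare_le (hR : 0 ≤ R) : ∑ i ∈ s, proportionalShare s w R i ≤ R := by
  simp only [proportionalShare, ← sum_div, ← mul_sum]
  rcases eq_or_ne (∑ j ∈ s, w j) 0 with h | h
  · simpa [h] using hR
  · rw [mul_div_cancel_right₀ R h]

theorem proportionalShare_pos [IsStrictOrderedRing K] {i : ι} (hw : ∀ j ∈ s, 0 < w j) (hR : 0 < R) (hi : i ∈ s) :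
    0 < proportionalShare s w R i :=
  div_pos (mul_pos hR (hw i hi)) (sum_pos hw ⟨i, hi⟩)

theorem div_proportionalShare [IsStrictOrderedRing K] {i : ι} (hw : ∀ j ∈ s, 0 < w j) (hR : R ≠ 0) (hi : i ∈ s) :
    w i / proportionalShare s w R i = (∑ j ∈ s, w j) / R := by
  have := (hw i hi).ne'
  have := (sum_pos hw ⟨i, hi⟩).ne'
  unfold proportionalShare
  field_simp

end ProportionalShare

theorem two_stage_allocation_feasible_general {ι : Type*} [DecidableEq ι] (T S : Finset ι)
    (hTS : Disjoint T S)
    (D O C : ι → ℝ) (Ru Rd Rf : ℝ)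
    (hD : ∀ i ∈ T ∪ S, 0 < D i) (hO : ∀ i ∈ T ∪ S, 0 < O i)
    (hC : ∀ i ∈ T, 0 < C i)
    (hRu : 0 < Ru) (hRd : 0 < Rd) (hRf : 0 < Rf)
    (βf : ℝ) (hβf : βf = (∑ i ∈ T, C i) / Rf) (hβflt : βf < 1)
    (hγ : ((∑ i ∈ T, D i / (1 - βf)) + ∑ i ∈ S, D i) / Ru +
          ((∑ i ∈ T, O i / (1 - βf)) + ∑ i ∈ S, O i) / Rd ≤ 1) :
    ∃ ru rd rf : ι → ℝ,
      (∀ i ∈ T ∪ S, 0 < ru i) ∧ (∀ i ∈ T ∪ S, 0 < rd i) ∧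
      (∀ i ∈ T, 0 < rf i) ∧
      (∑ i ∈ T, rf i) ≤ Rf ∧
      (∑ i ∈ T ∪ S, ru i) ≤ Ru ∧ (∑ i ∈ T ∪ S, rd i) ≤ Rd ∧
      (∀ i ∈ T, D i / ru i + O i / rd i + C i / rf i ≤ 1) ∧
      (∀ i ∈ S, D i / ru i + O i / rd i ≤ 1) := by
  have h1β : 0 < 1 - βf := by linarith
  set d := T.piecewise (fun i ↦ D i / (1 - βf)) D
  set o := T.piecewise (fun i ↦ O i / (1 - βf)) O
  have hd : ∀ i ∈ T ∪ S, 0 < d i := fun i hi ↦ by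
    by_cases hiT : i ∈ T <;> simp [d, hiT, hD i hi, h1β]
  have ho : ∀ i ∈ T ∪ S, 0 < o i := fun i hi ↦ by
    by_cases hiT : i ∈ T <;> simp [o, hiT, hO i hi, h1β]
  set γu := (∑ i ∈ T ∪ S, d i) / Ru
  set γd := (∑ i ∈ T ∪ S, o i) / Rd
  have hγud : γu + γd ≤ 1 := by
    simpa only [γu, γd, d, o, sum_union_piecewise_of_disjoint hTS] using hγ
  have hDu : ∀ i ∈ T ∪ S, d i / proportionalShare (T ∪ S) d Ru i = γu :=
    fun i ↦ div_proportionalShare hd hRu.ne'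
  have hOd : ∀ i ∈ T ∪ S, o i / proportionalShare (T ∪ S) o Rd i = γd :=
    fun i ↦ div_proportionalShare ho hRd.ne'
  refine ⟨proportionalShare (T ∪ S) d Ru, proportionalShare (T ∪ S) o Rd,
    proportionalShare T C Rf, fun i ↦ proportionalShare_pos hd hRu,
    fun i ↦ proportionalShare_pos ho hRd, fun i ↦ proportionalShare_pos hC hRf,
    sum_proportionalShare_le hRf.le, sum_proportionalShare_le hRu.le,
    sum_proportionalShare_le hRd.le, fun i hi ↦ ?_, fun i hi ↦ ?_⟩
  · rw [← mul_piecewise_div_of_mem D h1β.ne' hi, ← mul_piecewise_div_of_mem O h1β.ne' hi,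
      mul_div_assoc, mul_div_assoc, hDu i (mem_union_left S hi),
      hOd i (mem_union_left S hi), div_proportionalShare hC hRf.ne' hi, ← hβf]
    linarith [mul_le_mul_of_nonneg_left hγud h1β.le]
  · have hiT : i ∉ T := disjoint_right.mp hTS hi
    have hDi : D i = d i := (piecewise_eq_of_notMem _ _ _ hiT).symm
    have hOi : O i = o i := (piecewise_eq_of_notMem _ _ _ hiT).symm
    rwa [hDi, hOi, hDu i (mem_union_right T hi), hOd i (mem_union_right T hi)]

theorem two_stage_allocation_feasible {ι : Type*} [DecidableEq ι] (T S : Finset ι)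
    (hTS : Disjoint T S) (hT : T.Nonempty) (hS : S.Nonempty)
    (D O C : ι → ℝ) (Ru Rd Rf : ℝ)
    (hD : ∀ i ∈ T ∪ S, 0 < D i) (hO : ∀ i ∈ T ∪ S, 0 < O i)
    (hC : ∀ i ∈ T, 0 < C i)
    (hRu : 0 < Ru) (hRd : 0 < Rd) (hRf : 0 < Rf)
    (βf : ℝ) (hβf : βf = (∑ i ∈ T, C i) / Rf) (hβflt : βf < 1)
    (hγ : ((∑ i ∈ T, D i / (1 - βf)) + ∑ i ∈ S, D i) / Ru +
          ((∑ i ∈ T, O i / (1 - βf)) + ∑ i ∈ S, O i) / Rd ≤ 1) :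
    ∃ ru rd rf : ι → ℝ,
      (∀ i ∈ T ∪ S, 0 < ru i) ∧ (∀ i ∈ T ∪ S, 0 < rd i) ∧
      (∀ i ∈ T, 0 < rf i) ∧
      (∑ i ∈ T, rf i) ≤ Rf ∧
      (∑ i ∈ T ∪ S, ru i) ≤ Ru ∧ (∑ i ∈ T ∪ S, rd i) ≤ Rd ∧
      (∀ i ∈ T, D i / ru i + O i / rd i + C i / rf i ≤ 1) ∧
      (∀ i ∈ S, D i / ru i + O i / rd i ≤ 1) :=
  two_stage_allocation_feasible_general T S hTS D O C Ru Rd Rf hD hO hC hRu hRd hRf βf hβf hβflt hγ
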